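/- arXiv:1309.3751 — 2 statements merged into one kernel-verified Lean document; each statement's English description precedes it below -/
import Mathlib

section
/- There exists a constant C > 0 such that for every Schwartz function f : ℝ → ℂ, ‖x ↦ x·f(x)‖ ≤ C·‖x ↦ -f''(x) + x²·f(x) + f(x)‖^{1/2}·‖f‖^{1/2}. -/
open MeasureTheory

/-- The `L²(ℝ)` norm of a function `f : ℝ → ℂ`. -/
noncomputable def L2N (f : ℝ → ℂ) : ℝ := (∫ x : ℝ, ‖f x‖ ^ 2) ^ ((1 : ℝ) / 2)

/-!
With `T f = -f'' + x² f`, integration by parts gives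
`⟪(T + 1) f, f⟫ = ‖f'‖² + ‖x f‖² + ‖f‖² ≥ ‖x f‖²`, while Cauchy–Schwarz in `L²` bounds the left
side by `‖(T + 1) f‖ ‖f‖`. Taking square roots gives the claim with `C = 1`.
-/

open scoped RealInnerProductSpace SchwartzMap

namespace SchwartzMap

variable {E F : Type*} [NormedAddCommGroup E] [NormedSpace ℝ E] [MeasurableSpace E] [BorelSpace E]
  [SecondCountableTopology E] [NormedAddCommGroup F] [InnerProductSpace ℝ F]

theorem integrable_inner (f g : 𝓢(E, F)) (μ : Measure E := by volume_tac) [μ.HasTemperateGrowth] :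
    Integrable (fun x ↦ ⟪f x, g x⟫) μ := by
  simpa [pairing_apply, innerSL_apply_apply ℝ] using (pairing (innerSL ℝ) f g).integrable (μ := μ)

theorem integral_inner_le (f g : 𝓢(E, F)) (μ : Measure E := by volume_tac)
    [μ.HasTemperateGrowth] :
    ∫ x, ⟪f x, g x⟫ ∂μ ≤
      (∫ x, ‖f x‖ ^ 2 ∂μ) ^ ((1 : ℝ) / 2) * (∫ x, ‖g x‖ ^ 2 ∂μ) ^ ((1 : ℝ) / 2) := by
  have hnorm (h : 𝓢(E, F)) : ‖h.toLp 2 μ‖ = (∫ x, ‖h x‖ ^ 2 ∂μ) ^ ((1 : ℝ) / 2) := by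
    rw [norm_toLp' two_ne_zero ENNReal.ofNat_ne_top]; norm_num
  have hinner : ⟪f.toLp 2 μ, g.toLp 2 μ⟫ = ∫ x, ⟪f x, g x⟫ ∂μ := by
    rw [L2.inner_def]
    refine integral_congr_ae ?_
    filter_upwards [f.coeFn_toLp 2 μ, g.coeFn_toLp 2 μ] with x hf hg
    rw [hf, hg]
  rw [← hinner, ← hnorm, ← hnorm]
  exact real_inner_le_norm _ _

theorem coe_derivCLM (f : 𝓢(ℝ, F)) : ⇑(derivCLM ℝ F f) = deriv f :=
  funext (derivCLM_apply ℝ f)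

variable (F) in
noncomputable def harmonicOscillator : 𝓢(ℝ, F) →L[ℝ] 𝓢(ℝ, F) :=
  -((derivCLM ℝ F).comp (derivCLM ℝ F)) + smulLeftCLM F (fun x : ℝ ↦ x ^ 2)

theorem harmonicOscillator_apply (f : 𝓢(ℝ, F)) (x : ℝ) :
    harmonicOscillator F f x = -deriv (deriv f) x + x ^ 2 • f x := by
  have : (fun x : ℝ ↦ x ^ 2).HasTemperateGrowth := by fun_prop
  simp [harmonicOscillator, smulLeftCLM_apply_apply this, coe_derivCLM]

theorem integral_inner_harmonicOscillator_self (f : 𝓢(ℝ, F)) :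
    ∫ x, ⟪harmonicOscillator F f x, f x⟫ = (∫ x, ‖deriv f x‖ ^ 2) + ∫ x, ‖x • f x‖ ^ 2 := by
  set f' := derivCLM ℝ F f
  set f'' := derivCLM ℝ F f'
  set xf := smulLeftCLM F (fun x : ℝ ↦ x) f
  have hf' : ⇑f' = deriv f := coe_derivCLM f
  have hf'' : ⇑f'' = deriv f' := coe_derivCLM f'
  have hxf : ⇑xf = fun x ↦ x • f x := smulLeftCLM_apply (by fun_prop) f
  have hpoint (x : ℝ) : ⟪harmonicOscillator F f x, f x⟫ = -⟪f'' x, f x⟫ + ⟪xf x, xf x⟫ := by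
    rw [harmonicOscillator_apply, hf'', hf', hxf, inner_add_left, inner_neg_left,
      inner_smul_left, inner_smul_left, inner_smul_right]
    simp [pow_two, mul_assoc]
  have hparts : ∫ x, ⟪f' x, f' x⟫ = -∫ x, ⟪f'' x, f x⟫ := by
    simpa [innerSL_apply_apply ℝ, ← hf', ← hf''] using
      integral_bilinear_deriv_right_eq_neg_left f' f (innerSL ℝ)
  calc ∫ x, ⟪harmonicOscillator F f x, f x⟫
      = -(∫ x, ⟪f'' x, f x⟫) + ∫ x, ⟪xf x, xf x⟫ := by
        simp only [hpoint]
        rw [← integral_neg]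
        exact integral_add (integrable_inner f'' f).fun_neg (integrable_inner xf xf)
    _ = (∫ x, ‖deriv f x‖ ^ 2) + ∫ x, ‖x • f x‖ ^ 2 := by
        rw [← hparts]
        simp only [real_inner_self_eq_norm_sq, hf', hxf]

theorem integral_norm_smul_sq_le_integral_inner_harmonicOscillator_add (f : 𝓢(ℝ, F)) :
    ∫ x, ‖x • f x‖ ^ 2 ≤ ∫ x, ⟪(harmonicOscillator F f + f) x, f x⟫ := by
  have hsplit : ∫ x, ⟪(harmonicOscillator F f + f) x, f x⟫ =
      (∫ x, ⟪harmonicOscillator F f x, f x⟫) + ∫ x, ⟪f x, f x⟫ := by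
    simp only [add_apply, inner_add_left]
    exact integral_add (integrable_inner _ f) (integrable_inner f f)
  have hderiv : 0 ≤ ∫ x, ‖deriv f x‖ ^ 2 := integral_nonneg fun x ↦ by positivity
  have hself : 0 ≤ ∫ x, ⟪f x, f x⟫ := integral_nonneg fun x ↦ real_inner_self_nonneg
  rw [hsplit, integral_inner_harmonicOscillator_self]
  linarith

end SchwartzMap

open SchwartzMap

/-- The multiplication operator `x` is `1/2`-subordinated to `T + 1`,
where `T = -d²/dx² + x²` is the harmonic oscillator. -/
theorem stmt_1 :
    ∃ C : ℝ, 0 < C ∧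
      ∀ f : SchwartzMap ℝ ℂ,
        L2N (fun x : ℝ => (x : ℂ) * f x)
          ≤ C * L2N (fun x : ℝ => -(deriv (deriv ⇑f) x) + (x : ℂ) ^ 2 * f x + f x)
                ^ ((1 : ℝ) / 2)
             * L2N ⇑f ^ ((1 : ℝ) / 2) := by
  refine ⟨1, one_pos, fun f ↦ ?_⟩
  set g := harmonicOscillator ℂ f + f
  have hg : (fun x : ℝ ↦ -(deriv (deriv ⇑f) x) + (x : ℂ) ^ 2 * f x + f x) = g := by
    ext x
    simp [g, harmonicOscillator_apply, Complex.real_smul]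
  have hxf : (fun x : ℝ ↦ (x : ℂ) * f x) = fun x ↦ x • f x := by
    ext x
    simp [Complex.real_smul]
  have hsq_nonneg (h : ℝ → ℂ) : 0 ≤ ∫ x, ‖h x‖ ^ 2 := integral_nonneg fun x ↦ by positivity
  have hquad := integral_norm_smul_sq_le_integral_inner_harmonicOscillator_add f
  have hL2N_nonneg (h : ℝ → ℂ) : 0 ≤ L2N h := Real.rpow_nonneg (hsq_nonneg h) _
  rw [hg, hxf, one_mul, ← Real.mul_rpow (hL2N_nonneg g) (hL2N_nonneg f)]
  exact Real.rpow_le_rpow (hsq_nonneg _) (hquad.trans (integral_inner_le g f)) (by norm_num)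
end

section
/- Let β ≥ 2. There exist constants k₁, k₂ > 0 such that for every Schwartz function f : ℝ → ℂ, k₁·(‖f''‖² + ‖x ↦ |x|^β·f(x)‖² + ‖f‖²) ≤ ‖x ↦ -f''(x) + |x|^β·f(x)‖² + ‖f‖² ≤ k₂·(‖f''‖² + ‖x ↦ |x|^β·f(x)‖² + ‖f‖²). -/
/-!
Write `V x = |x| ^ β`. Expanding the square,
`‖-f'' + V f‖² = ‖f''‖² + ‖V f‖² - 2 ∫ V ⟪f, f''⟫`, and since `(V ⟪f, f'⟫)'` integrates to zero
over `ℝ`, `-∫ V ⟪f, f''⟫ = ∫ V ‖f'‖² + ∫ V' ⟪f, f'⟫`. Completing the square with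
`V = |x| ^ (β - 2) x²` bounds this from below by `-(β² / 4) ∫ |x| ^ (β - 2) ‖f‖²`, and for `β ≥ 2`
the weight `|x| ^ (β - 2)` is at most `V² / β² + 1 + β² / 4`. Hence
`‖f''‖² + ‖V f‖² / 2 ≤ ‖-f'' + V f‖² + C ‖f‖²`; the reverse bound is the triangle inequality.
-/

open MeasureTheory

open SchwartzMap
open scoped RealInnerProductSpace

variable {E F G : Type*} [NormedAddCommGroup E] [InnerProductSpace ℝ E]
  [NormedAddCommGroup F] [NormedSpace ℝ F] [NormedAddCommGroup G] [NormedSpace ℝ G]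

lemma sq_L2N (g : ℝ → ℂ) : L2N g ^ 2 = ∫ x, ‖g x‖ ^ 2 := by
  rw [L2N, ← Real.rpow_natCast, ← Real.rpow_mul (integral_nonneg fun x => by positivity)]
  norm_num

lemma Real.rpow_le_one_add_rpow {x r s : ℝ} (hx : 0 ≤ x) (hr : 0 ≤ r) (hrs : r ≤ s) :
    x ^ r ≤ 1 + x ^ s := by
  rcases le_total x 1 with h | h
  · linarith [Real.rpow_le_one hx h hr, Real.rpow_nonneg hx s]
  · linarith [Real.rpow_le_rpow_of_exponent_le h hrs]

lemma sq_mul_abs_rpow_sub_two_le {β : ℝ} (hβ : 2 ≤ β) (x : ℝ) :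
    β ^ 2 * |x| ^ (β - 2) ≤ (|x| ^ β) ^ 2 + β ^ 2 + β ^ 4 / 4 := by
  have h := Real.rpow_le_one_add_rpow (abs_nonneg x) (by linarith : 0 ≤ β - 2) (by linarith)
  nlinarith [mul_le_mul_of_nonneg_left h (sq_nonneg β), sq_nonneg (|x| ^ β - β ^ 2 / 2)]

lemma norm_add_sq_le_two_mul (a b : E) : ‖a + b‖ ^ 2 ≤ 2 * ‖a‖ ^ 2 + 2 * ‖b‖ ^ 2 := by
  linarith [parallelogram_law_with_norm ℝ a b, sq_nonneg ‖a - b‖]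

lemma neg_mul_abs_rpow_sub_two_le {β : ℝ} (hβ : β ≠ 0) (x : ℝ) (a b : E) :
    -(β ^ 2 / 2 * |x| ^ (β - 2) * ‖a‖ ^ 2) ≤
      2 * (β * |x| ^ (β - 2) * x * ⟪a, b⟫ + |x| ^ β * ⟪b, b⟫) := by
  have hβx : |x| ^ β = |x| ^ (β - 2) * |x| ^ 2 := by
    rw [← Real.rpow_natCast, ← Real.rpow_add' (abs_nonneg x) (by simpa using hβ)]
    norm_num
  have ht : 0 ≤ |x| ^ (β - 2) := Real.rpow_nonneg (abs_nonneg x) _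
  have hinner : -(|β| * |x| * (‖a‖ * ‖b‖)) ≤ β * x * ⟪a, b⟫ := by
    refine (abs_le.mp ?_).1
    rw [abs_mul, abs_mul]
    gcongr
    exact abs_real_inner_le_norm a b
  rw [hβx, real_inner_self_eq_norm_sq, ← sq_abs β]
  nlinarith [mul_nonneg ht (sq_nonneg (|x| * ‖b‖ - |β| / 2 * ‖a‖)),
    mul_le_mul_of_nonneg_left hinner ht]

/-- At `a = f x`, `b = f' x`, `d = f'' x` the term `2 * (…)` is `2 * derivAbsRpowMulInner β f x`,
whose integral vanishes. -/
lemma norm_sq_add_half_le {β : ℝ} (hβ : 2 ≤ β) (x : ℝ) (a b d : E) :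
    ‖d‖ ^ 2 + ‖|x| ^ β • a‖ ^ 2 / 2 ≤ ‖-d + |x| ^ β • a‖ ^ 2
      + 2 * (β * |x| ^ (β - 2) * x * ⟪a, b⟫ + |x| ^ β * ⟪a, d⟫ + |x| ^ β * ⟪b, b⟫)
      + (β ^ 2 / 2 + β ^ 4 / 8) * ‖a‖ ^ 2 := by
  have hexpand : ‖-d + |x| ^ β • a‖ ^ 2 =
      ‖|x| ^ β • a‖ ^ 2 - 2 * (|x| ^ β * ⟪a, d⟫) + ‖d‖ ^ 2 := by
    rw [neg_add_eq_sub, norm_sub_sq_real, real_inner_smul_left]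
  have hsmul : ‖|x| ^ β • a‖ ^ 2 = (|x| ^ β) ^ 2 * ‖a‖ ^ 2 := by
    rw [norm_smul, mul_pow, Real.norm_eq_abs, sq_abs]
  have hcross := neg_mul_abs_rpow_sub_two_le (by linarith : β ≠ 0) x a b
  have hweight := mul_le_mul_of_nonneg_right (sq_mul_abs_rpow_sub_two_le hβ x) (sq_nonneg ‖a‖)
  rw [hexpand]
  linarith

noncomputable def derivAbsRpowMulInner (β : ℝ) (f : ℝ → E) (x : ℝ) : ℝ :=
  β * |x| ^ (β - 2) * x * ⟪f x, deriv f x⟫ + |x| ^ β * ⟪f x, deriv (deriv f) x⟫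
    + |x| ^ β * ⟪deriv f x, deriv f x⟫

namespace SchwartzMap

lemma integrable_abs_rpow_mul_norm (g : 𝓢(ℝ, F)) {r : ℝ} (hr : 0 ≤ r) :
    Integrable fun x => |x| ^ r * ‖g x‖ := by
  refine ((g.integrable_pow_mul volume 0).add (g.integrable_pow_mul volume ⌈r⌉₊)).mono'
    (by fun_prop) (ae_of_all _ fun x => ?_)
  have hle := Real.rpow_le_one_add_rpow (abs_nonneg x) hr (Nat.le_ceil r)
  rw [Real.rpow_natCast] at hle
  simp only [Pi.add_apply, Real.norm_eq_abs, pow_zero, one_mul, abs_mul, abs_norm,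
    abs_of_nonneg (Real.rpow_nonneg (abs_nonneg x) r)]
  nlinarith [norm_nonneg (g x)]

lemma integrable_abs_rpow_mul_norm_mul_norm (g : 𝓢(ℝ, F)) (h : 𝓢(ℝ, G)) {r : ℝ} (hr : 0 ≤ r) :
    Integrable fun x => |x| ^ r * (‖g x‖ * ‖h x‖) := by
  simp_rw [← mul_assoc]
  exact (g.integrable_abs_rpow_mul_norm hr).mul_bdd (by fun_prop)
    (ae_of_all _ fun x => by simpa using h.norm_le_seminorm ℝ x)

lemma integrable_abs_rpow_mul_inner (g h : 𝓢(ℝ, E)) {r : ℝ} (hr : 0 ≤ r) :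
    Integrable fun x => |x| ^ r * ⟪g x, h x⟫ := by
  refine (g.integrable_abs_rpow_mul_norm_mul_norm h hr).mono' (by fun_prop)
    (ae_of_all _ fun x => ?_)
  rw [norm_mul, Real.norm_eq_abs, abs_of_nonneg (Real.rpow_nonneg (abs_nonneg x) r)]
  exact mul_le_mul_of_nonneg_left (abs_real_inner_le_norm _ _) (by positivity)

lemma integrable_norm_sq (g : 𝓢(ℝ, F)) : Integrable fun x => ‖g x‖ ^ 2 :=
  (memLp_two_iff_integrable_sq_norm g.continuous.aestronglyMeasurable).1 (g.memLp 2)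

lemma integrable_norm_deriv_deriv_sq (g : 𝓢(ℝ, F)) :
    Integrable fun x => ‖deriv (deriv g) x‖ ^ 2 :=
  (derivCLM ℝ F (derivCLM ℝ F g)).integrable_norm_sq

lemma integrable_norm_abs_rpow_smul_sq (g : 𝓢(ℝ, F)) {r : ℝ} (hr : 0 ≤ r) :
    Integrable fun x => ‖|x| ^ r • g x‖ ^ 2 := by
  refine (g.integrable_abs_rpow_mul_norm_mul_norm g (by positivity : 0 ≤ 2 * r)).congr
    (ae_of_all _ fun x => ?_)
  dsimp only
  rw [norm_smul, Real.norm_eq_abs, abs_of_nonneg (Real.rpow_nonneg (abs_nonneg x) r), mul_pow,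
    ← Real.rpow_natCast, ← Real.rpow_mul (abs_nonneg x), sq]
  norm_num [mul_comm]

variable {β : ℝ}

lemma hasDerivAt_abs_rpow_mul_inner (hβ : 1 < β) (f : 𝓢(ℝ, E)) (x : ℝ) :
    HasDerivAt (fun x => |x| ^ β * ⟪f x, deriv f x⟫) (derivAbsRpowMulInner β f x) x := by
  have hf' : HasDerivAt (deriv f) (deriv (deriv f) x) x := (derivCLM ℝ E f).hasDerivAt x
  refine ((hasDerivAt_abs_rpow x hβ).mul ((f.hasDerivAt x).inner ℝ hf')).congr_deriv ?_
  rw [derivAbsRpowMulInner, real_inner_comm (deriv f x) (f x)]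
  ring

lemma integrable_derivAbsRpowMulInner (hβ : 1 < β) (f : 𝓢(ℝ, E)) :
    Integrable (derivAbsRpowMulInner β f) := by
  let f' := derivCLM ℝ E f
  have hfirst : Integrable fun x => β * |x| ^ (β - 2) * x * ⟪f x, f' x⟫ := by
    refine ((f.integrable_abs_rpow_mul_norm_mul_norm f' (by linarith : 0 ≤ β - 1)).const_mul
      β).mono' (by fun_prop) (ae_of_all _ fun x => ?_)
    have hx : |x| ^ (β - 2) * |x| = |x| ^ (β - 1) := by
      rw [← Real.rpow_add_one' (abs_nonneg x) (by linarith)]; ring_nf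
    rw [norm_mul, Real.norm_eq_abs, abs_mul, abs_mul, abs_of_nonneg (by linarith : 0 ≤ β),
      abs_of_nonneg (Real.rpow_nonneg (abs_nonneg x) _), mul_assoc β, hx, mul_assoc]
    gcongr
    exact abs_real_inner_le_norm _ _
  exact (hfirst.add (f.integrable_abs_rpow_mul_inner (derivCLM ℝ E f') (by linarith))).add
    (f'.integrable_abs_rpow_mul_inner f' (by linarith))

lemma integral_derivAbsRpowMulInner (hβ : 1 < β) (f : 𝓢(ℝ, E)) :
    ∫ x, derivAbsRpowMulInner β f x = 0 :=
  integral_eq_zero_of_hasDerivAt_of_integrable (f.hasDerivAt_abs_rpow_mul_inner hβ)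
    (f.integrable_derivAbsRpowMulInner hβ)
    (f.integrable_abs_rpow_mul_inner (derivCLM ℝ E f) (by linarith))

lemma integrable_norm_neg_add_abs_rpow_smul_sq (hβ : 0 ≤ β) (f : 𝓢(ℝ, E)) :
    Integrable fun x => ‖-deriv (deriv f) x + |x| ^ β • f x‖ ^ 2 := by
  have hf'' : Continuous (deriv (deriv f)) := (derivCLM ℝ E (derivCLM ℝ E f)).continuous
  exact ((f.integrable_norm_deriv_deriv_sq.const_mul 2).add
    ((f.integrable_norm_abs_rpow_smul_sq hβ).const_mul 2)).mono' (by fun_prop)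
    (ae_of_all _ fun x => by
      simpa using norm_add_sq_le_two_mul (-deriv (deriv f) x) (|x| ^ β • f x))

lemma integral_norm_neg_add_abs_rpow_smul_sq_le (hβ : 0 ≤ β) (f : 𝓢(ℝ, E)) :
    ∫ x, ‖-deriv (deriv f) x + |x| ^ β • f x‖ ^ 2 ≤
      2 * (∫ x, ‖deriv (deriv f) x‖ ^ 2) + 2 * ∫ x, ‖|x| ^ β • f x‖ ^ 2 := by
  have hA := f.integrable_norm_deriv_deriv_sq.const_mul 2
  have hB := (f.integrable_norm_abs_rpow_smul_sq hβ).const_mul 2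
  calc ∫ x, ‖-deriv (deriv f) x + |x| ^ β • f x‖ ^ 2
      ≤ ∫ x, (2 * ‖deriv (deriv f) x‖ ^ 2 + 2 * ‖|x| ^ β • f x‖ ^ 2) :=
        integral_mono (f.integrable_norm_neg_add_abs_rpow_smul_sq hβ) (hA.add hB) fun x => by
          simpa using norm_add_sq_le_two_mul (-deriv (deriv f) x) (|x| ^ β • f x)
    _ = _ := by rw [integral_add hA hB, integral_const_mul, integral_const_mul]

lemma integral_norm_sq_add_half_le (hβ : 2 ≤ β) (f : 𝓢(ℝ, E)) :
    (∫ x, ‖deriv (deriv f) x‖ ^ 2) + (∫ x, ‖|x| ^ β • f x‖ ^ 2) / 2 ≤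
      (∫ x, ‖-deriv (deriv f) x + |x| ^ β • f x‖ ^ 2)
        + (β ^ 2 / 2 + β ^ 4 / 8) * ∫ x, ‖f x‖ ^ 2 := by
  have hA := f.integrable_norm_deriv_deriv_sq
  have hB := (f.integrable_norm_abs_rpow_smul_sq (by linarith : 0 ≤ β)).div_const 2
  have hC := f.integrable_norm_sq.const_mul (β ^ 2 / 2 + β ^ 4 / 8)
  have hT := f.integrable_norm_neg_add_abs_rpow_smul_sq (by linarith : 0 ≤ β)
  have hG := (f.integrable_derivAbsRpowMulInner (by linarith : 1 < β)).const_mul 2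
  have hTG : Integrable fun x =>
      ‖-deriv (deriv f) x + |x| ^ β • f x‖ ^ 2 + 2 * derivAbsRpowMulInner β f x := hT.add hG
  calc (∫ x, ‖deriv (deriv f) x‖ ^ 2) + (∫ x, ‖|x| ^ β • f x‖ ^ 2) / 2
      = ∫ x, (‖deriv (deriv f) x‖ ^ 2 + ‖|x| ^ β • f x‖ ^ 2 / 2) := by
        rw [integral_add hA hB, integral_div]
    _ ≤ ∫ x, (‖-deriv (deriv f) x + |x| ^ β • f x‖ ^ 2 + 2 * derivAbsRpowMulInner β f x
          + (β ^ 2 / 2 + β ^ 4 / 8) * ‖f x‖ ^ 2) :=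
        integral_mono (hA.add hB) (hTG.add hC) fun x =>
          norm_sq_add_half_le hβ x (f x) (deriv f x) (deriv (deriv f) x)
    _ = _ := by
        rw [integral_add hTG hC, integral_add hT hG, integral_const_mul, integral_const_mul,
          f.integral_derivAbsRpowMulInner (by linarith)]
        ring

end SchwartzMap

/-- Graph-norm equivalence for the anharmonic oscillator `T = -d²/dx² + |x|^β`, `β ≥ 2`. -/
theorem stmt_9 (β : ℝ) (hβ : 2 ≤ β) :
    ∃ k₁ k₂ : ℝ, 0 < k₁ ∧ 0 < k₂ ∧
      ∀ f : SchwartzMap ℝ ℂ,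
        k₁ * (L2N (deriv (deriv ⇑f)) ^ 2 + L2N (fun x : ℝ => ((|x| ^ β : ℝ) : ℂ) * f x) ^ 2
            + L2N ⇑f ^ 2)
          ≤ L2N (fun x : ℝ => -(deriv (deriv ⇑f) x) + ((|x| ^ β : ℝ) : ℂ) * f x) ^ 2
            + L2N ⇑f ^ 2 ∧
        L2N (fun x : ℝ => -(deriv (deriv ⇑f) x) + ((|x| ^ β : ℝ) : ℂ) * f x) ^ 2
            + L2N ⇑f ^ 2
          ≤ k₂ * (L2N (deriv (deriv ⇑f)) ^ 2
            + L2N (fun x : ℝ => ((|x| ^ β : ℝ) : ℂ) * f x) ^ 2 + L2N ⇑f ^ 2) := by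
  refine ⟨(β ^ 2 + β ^ 4 / 4 + 2)⁻¹, 2, by positivity, two_pos, fun f => ?_⟩
  simp only [sq_L2N, ← Complex.real_smul]
  have hlower := f.integral_norm_sq_add_half_le hβ
  have hupper := f.integral_norm_neg_add_abs_rpow_smul_sq_le (by linarith : 0 ≤ β)
  have hA : 0 ≤ ∫ x, ‖deriv (deriv f) x‖ ^ 2 := integral_nonneg fun _ => by positivity
  have hC : 0 ≤ ∫ x, ‖f x‖ ^ 2 := integral_nonneg fun _ => by positivity
  have hT : 0 ≤ ∫ x, ‖-deriv (deriv f) x + |x| ^ β • f x‖ ^ 2 :=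
    integral_nonneg fun _ => by positivity
  refine ⟨(inv_mul_le_iff₀ (by positivity)).2 ?_, by linarith⟩
  nlinarith [mul_nonneg (by positivity : 0 ≤ β ^ 2 + β ^ 4 / 4) hT]
end
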